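/- arXiv:1502.02391 — 2 statements merged into one kernel-verified Lean document; each statement's English description precedes it below -/
import Mathlib

section
/- Let Γ, H and A be countable groups such that Γ is ICC and A is virtually abelian. Assume there exists an injective group homomorphism Φ : Γ → H × A such that π_A ∘ Φ maps Γ onto A, where π_A : H × A → A denotes the canonical projection. Then there exist a finite-index subgroup Γ₀ of Γ and an injective group homomorphism ρ : Γ₀ → H. -/
/-!
Take `Γ₀ = (π_A ∘ Φ)⁻¹(B)` for an abelian subgroup `B` of finite index in `A`, and
`ρ = π_H ∘ Φ` on `Γ₀`. An element `γ` of its kernel has `Φ γ = (1, a)` with `a ∈ B`, so by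
injectivity of `Φ` it commutes with all of `Γ₀`. Its centralizer then has finite index, so its
conjugacy class is finite, and the ICC property forces `γ = 1`.
-/

namespace Subgroup

variable {G G' : Type*} [Group G] [Group G']

theorem finiteIndex_comap (f : G →* G') (B : Subgroup G') [B.FiniteIndex] :
    (B.comap f).FiniteIndex := by
  have hB : B.relIndex ⊤ ≠ 0 := by simpa using FiniteIndex.index_ne_zero (H := B)
  exact ⟨by simpa using relIndex_comap_ne_zero f hB⟩

theorem finite_conjugates_of_finiteIndex_centralizer (g : G)
    [(centralizer {g}).FiniteIndex] : {x : G | ∃ h : G, h * g * h⁻¹ = x}.Finite := by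
  have horbit : {x : G | ∃ h : G, h * g * h⁻¹ = x} = MulAction.orbit (ConjAct G) g := by
    ext x
    rw [Set.mem_ofPred_eq, ConjAct.mem_orbit_conjAct, isConj_comm, isConj_iff]
  have hindex : (MulAction.stabilizer (ConjAct G) g).index = (centralizer {g}).index := by
    rw [centralizer_eq_comap_stabilizer]
    exact (index_comap_of_surjective _ ConjAct.toConjAct.surjective).symm
  rw [horbit]
  apply Set.finite_of_ncard_ne_zero
  rw [← MulAction.index_stabilizer, hindex]
  exact FiniteIndex.index_ne_zero

end Subgroup

theorem eq_one_of_forall_commute_of_finiteIndex {G : Type*} [Group G]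
    (hICC : ∀ γ : G, γ ≠ 1 → {x : G | ∃ h : G, h * γ * h⁻¹ = x}.Infinite)
    (K : Subgroup G) [K.FiniteIndex] {g : G} (hg : ∀ k ∈ K, Commute g k) : g = 1 := by
  have hle : K ≤ Subgroup.centralizer {g} := fun k hk ↦ by
    rw [Subgroup.mem_centralizer_singleton_iff]; exact (hg k hk).eq.symm
  have := Subgroup.finiteIndex_of_le hle
  by_contra hne
  exact hICC g hne (Subgroup.finite_conjugates_of_finiteIndex_centralizer g)

theorem commute_of_injective_of_fst_eq_one {G H A : Type*} [Group G] [Group H] [Group A]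
    {Φ : G →* H × A} (hΦ : Function.Injective Φ) {g k : G} (hg : (Φ g).1 = 1)
    (hgk : Commute (Φ g).2 (Φ k).2) : Commute g k :=
  hΦ <| by simp [Prod.ext_iff, hg, hgk.eq]

theorem abelian_reduction_general
    {Γ H A : Type*} [Group Γ] [Group H] [Group A]
    (hICC : ∀ γ : Γ, γ ≠ 1 → {x : Γ | ∃ h : Γ, h * γ * h⁻¹ = x}.Infinite)
    (hVA : ∃ B : Subgroup A, B.FiniteIndex ∧ ∀ x y : A, x ∈ B → y ∈ B → x * y = y * x)
    (Φ : Γ →* H × A) (hΦ : Function.Injective Φ) :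
    ∃ Γ₀ : Subgroup Γ, Γ₀.FiniteIndex ∧ ∃ ρ : Γ₀ →* H, Function.Injective ρ := by
  obtain ⟨B, hB, hBcomm⟩ := hVA
  let Γ₀ := B.comap ((MonoidHom.snd H A).comp Φ)
  have hΓ₀ : Γ₀.FiniteIndex := Subgroup.finiteIndex_comap _ B
  refine ⟨Γ₀, hΓ₀, (MonoidHom.fst H A).comp (Φ.comp Γ₀.subtype), ?_⟩
  rw [injective_iff_map_eq_one]
  intro γ hγ
  have hcentral : ∀ δ ∈ Γ₀, Commute (γ : Γ) δ := fun δ hδ ↦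
    commute_of_injective_of_fst_eq_one hΦ hγ (hBcomm _ _ γ.2 hδ)
  exact Subtype.ext (eq_one_of_forall_commute_of_finiteIndex hICC Γ₀ hcentral)

/-- Let Γ, H and A be countable groups such that Γ is ICC and A is
virtually abelian. Assume there exists an injective group homomorphism Φ : Γ → H × A
such that π_A ∘ Φ maps Γ onto A. Then there exist a finite-index subgroup Γ₀ of Γ and
an injective group homomorphism ρ : Γ₀ → H. -/
theorem abelian_reduction
    {Γ H A : Type*} [Group Γ] [Group H] [Group A]
    [Countable Γ] [Countable H] [Countable A]
    (hICC : ∀ γ : Γ, γ ≠ 1 → {x : Γ | ∃ h : Γ, h * γ * h⁻¹ = x}.Infinite)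
    (hVA : ∃ B : Subgroup A, B.FiniteIndex ∧ ∀ x y : A, x ∈ B → y ∈ B → x * y = y * x)
    (Φ : Γ →* H × A) (hΦ : Function.Injective Φ)
    (hsurj : Function.Surjective ((MonoidHom.snd H A).comp Φ)) :
    ∃ Γ₀ : Subgroup Γ, Γ₀.FiniteIndex ∧ ∃ ρ : Γ₀ →* H, Function.Injective ρ :=
  abelian_reduction_general hICC hVA Φ hΦ
end

section
/- Let θ : Γ → Λ be a group homomorphism and let L be a malnormal subgroup of Λ. Then for every h, k ∈ Γ \ θ⁻¹(L), one of the following holds: (1) h·θ⁻¹(L)·k⁻¹ ∩ θ⁻¹(L) = ∅; or (2) there exists ω ∈ θ⁻¹(L) such that h·θ⁻¹(L)·k⁻¹ ∩ θ⁻¹(L) = ω·ker(θ), the left coset of the kernel of θ by ω. Here h·θ⁻¹(L)·k⁻¹ denotes the set {h σ k⁻¹ : σ ∈ θ⁻¹(L)}. -/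
/-!
If `ω = h σ k⁻¹` and `x = h σ' k⁻¹` both lie in `H = θ⁻¹(L)`, then so does
`ω⁻¹ x = k (σ⁻¹ σ') k⁻¹`; as `θ k ∉ L`, malnormality of `L` forces `θ (σ⁻¹ σ') = 1`, so
`x ∈ ω ker θ`. Conversely `ω n = h (σ k⁻¹ n k) k⁻¹` stays in `h H k⁻¹ ∩ H` because `ker θ ≤ H`
is normal.
-/

section

variable {Γ Λ : Type*} [Group Γ] [Group Λ] {θ : Γ →* Λ} {L : Subgroup Λ}

theorem mem_ker_of_conj_mem_comap
    (hmal : ∀ g : Λ, g ∉ L → ∀ x : Λ, x ∈ L → g * x * g⁻¹ ∈ L → x = 1)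
    {k σ : Γ} (hk : k ∉ L.comap θ) (hσ : σ ∈ L.comap θ) (hkσ : k * σ * k⁻¹ ∈ L.comap θ) :
    σ ∈ θ.ker :=
  hmal (θ k) hk (θ σ) hσ (by simpa using hkσ)

theorem coset_inter_comap_eq_ker_coset
    (hmal : ∀ g : Λ, g ∉ L → ∀ x : Λ, x ∈ L → g * x * g⁻¹ ∈ L → x = 1)
    {h k ω : Γ} (hk : k ∉ L.comap θ)
    (hω : ω ∈ {x : Γ | ∃ σ ∈ L.comap θ, x = h * σ * k⁻¹} ∩ (L.comap θ : Set Γ)) :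
    {x : Γ | ∃ σ ∈ L.comap θ, x = h * σ * k⁻¹} ∩ (L.comap θ : Set Γ)
      = {x : Γ | ∃ n ∈ θ.ker, x = ω * n} := by
  obtain ⟨⟨σ, hσ, rfl⟩, hωH⟩ := hω
  have hker : θ.ker ≤ L.comap θ := θ.ker_le_comap L
  ext x
  constructor
  · rintro ⟨⟨σ', hσ', rfl⟩, hxH⟩
    have hconj : k * (σ⁻¹ * σ') * k⁻¹ = (h * σ * k⁻¹)⁻¹ * (h * σ' * k⁻¹) := by group
    have hσσ' : σ⁻¹ * σ' ∈ θ.ker :=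
      mem_ker_of_conj_mem_comap hmal hk (mul_mem (inv_mem hσ) hσ')
        (hconj ▸ mul_mem (inv_mem hωH) hxH)
    exact ⟨_, hconj ▸ θ.normal_ker.conj_mem _ hσσ' k, by group⟩
  · rintro ⟨n, hn, rfl⟩
    refine ⟨⟨σ * (k⁻¹ * n * k), mul_mem hσ (hker ?_), by group⟩, mul_mem hωH (hker hn)⟩
    simpa using θ.normal_ker.conj_mem n hn k⁻¹

end

theorem malnormal_coset_dichotomy_general
    {Γ Λ : Type*} [Group Γ] [Group Λ] (θ : Γ →* Λ) (L : Subgroup Λ)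
    (hmal : ∀ g : Λ, g ∉ L → ∀ x : Λ, x ∈ L → g * x * g⁻¹ ∈ L → x = 1)
    (h k : Γ) (hk : k ∉ L.comap θ) :
    ({x : Γ | ∃ σ ∈ L.comap θ, x = h * σ * k⁻¹} ∩ (L.comap θ : Set Γ) = ∅) ∨
      (∃ ω ∈ L.comap θ,
        {x : Γ | ∃ σ ∈ L.comap θ, x = h * σ * k⁻¹} ∩ (L.comap θ : Set Γ)
          = {x : Γ | ∃ n ∈ θ.ker, x = ω * n}) := by
  rcases Set.eq_empty_or_nonempty
      ({x : Γ | ∃ σ ∈ L.comap θ, x = h * σ * k⁻¹} ∩ (L.comap θ : Set Γ)) with hempty | ⟨ω, hω⟩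
  · exact Or.inl hempty
  · exact Or.inr ⟨ω, hω.2, coset_inter_comap_eq_ker_coset hmal hk hω⟩

/-- Let θ : Γ → Λ be a group homomorphism and L a malnormal subgroup
of Λ. Then for every h, k ∈ Γ \ θ⁻¹(L), either h·θ⁻¹(L)·k⁻¹ ∩ θ⁻¹(L) = ∅, or there
exists ω ∈ θ⁻¹(L) with h·θ⁻¹(L)·k⁻¹ ∩ θ⁻¹(L) = ω·ker(θ). -/
theorem malnormal_coset_dichotomy
    {Γ Λ : Type*} [Group Γ] [Group Λ] (θ : Γ →* Λ) (L : Subgroup Λ)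
    (hmal : ∀ g : Λ, g ∉ L → ∀ x : Λ, x ∈ L → g * x * g⁻¹ ∈ L → x = 1)
    (h k : Γ) (hh : h ∉ L.comap θ) (hk : k ∉ L.comap θ) :
    ({x : Γ | ∃ σ ∈ L.comap θ, x = h * σ * k⁻¹} ∩ (L.comap θ : Set Γ) = ∅) ∨
      (∃ ω ∈ L.comap θ,
        {x : Γ | ∃ σ ∈ L.comap θ, x = h * σ * k⁻¹} ∩ (L.comap θ : Set Γ)
          = {x : Γ | ∃ n ∈ θ.ker, x = ω * n}) :=
  malnormal_coset_dichotomy_general θ L hmal h k hk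
end
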